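/- Let k be any field of characteristic ≠ 2, and let j ≥ 1 be any positive integer. If m_{1,j}(k) < ∞, then m_{1,j}(k) ≥ m_{1,1}(k) + 2j − 2. -/

import Mathlib

/-!  Diagonal quadratic forms over a field of characteristic ≠ 2.
In characteristic ≠ 2 every regular quadratic form is isometric to a diagonal form
`⟨d 1, …, d n⟩`, so we model (regular) quadratic forms by their diagonal
coefficient functions. -/

/-- The diagonal quadratic form `⟨d i⟩_{i : ι}` over `k`. -/
noncomputable def diagQF (k : Type) [Field k] {ι : Type} [Fintype ι] (d : ι → k) :
    QuadraticForm k (ι → k) :=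
  QuadraticMap.weightedSumSquares k d

/-- Isometry of (diagonal) quadratic forms. -/
def FormIsom (k : Type) [Field k] {ι κ : Type} [Fintype ι] [Fintype κ]
    (d : ι → k) (e : κ → k) : Prop :=
  QuadraticMap.Equivalent (diagQF k d) (diagQF k e)

/-- The orthogonal sum of `m` copies of the hyperbolic plane `⟨1, -1⟩`. -/
def hypForm (k : Type) [Field k] (m : ℕ) : Fin (2 * m) → k :=
  fun j => if j.val % 2 = 0 then 1 else -1

/-- The Witt index of a (diagonal) form: the largest `m` such that the form is isometric
to `m·ℍ ⟂ (rest)` for some diagonal form `rest`. -/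
noncomputable def wittIndex (k : Type) [Field k] {ι : Type} [Fintype ι] (d : ι → k) : ℕ :=
  sSup {m : ℕ | ∃ (s : ℕ) (e : Fin s → k), FormIsom k d (Sum.elim (hypForm k m) e)}
/-- The u-invariant of a field: the supremum of the dimensions of anisotropic regular
quadratic forms over `k` (`⊤` if unbounded). -/
noncomputable def uInv (k : Type) [Field k] : ℕ∞ :=
  sSup {N : ℕ∞ | ∃ n : ℕ, N = n ∧
    ∃ d : Fin n → k, (∀ t, d t ≠ 0) ∧ (diagQF k d).Anisotropic}

/-- The refined m-invariant `m_{i,j}(k)`: the least dimension (`⊤` if there is none) of a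
regular quadratic form `q` of dimension ≥ 1 over `k` with `i_W(q) < j` such that
`i_W(q ⟂ σ) ≥ j` for every `i`-dimensional regular form `σ` over `k`. -/
noncomputable def mInv (k : Type) [Field k] (i j : ℕ) : ℕ∞ :=
  sInf {N : ℕ∞ | ∃ n : ℕ, N = n ∧ 1 ≤ n ∧
    ∃ d : Fin n → k, (∀ t, d t ≠ 0) ∧ wittIndex k d < j ∧
      ∀ σ : Fin i → k, (∀ t, σ t ≠ 0) → j ≤ wittIndex k (Sum.elim d σ)}

/-! Write a witness `q` of `m_{1,j}` as `q ≃ w·ℍ ⟂ r` with `i_W(r) = 0`. By Witt cancellation,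
`i_W(w·ℍ ⟂ r ⟂ σ) = w + i_W(r ⟂ σ)`, so `r ⟂ σ` is isotropic for every line `σ` and `r` is a
witness of `m_{1,1}`. Adjoining a line raises the Witt index by at most one, so `j ≤ w + 1`;
together with `w < j` this gives `w = j - 1`, hence `dim q = dim r + 2j - 2 ≥ m_{1,1} + 2j - 2`.
Witt cancellation of a line `⟨a⟩` comes from moving one basis vector of value `a` to the other
by at most two reflections; the resulting isometry then preserves the orthogonal complements. -/

open QuadraticMap

namespace QuadraticForm

variable {k V : Type*} [Field k] [AddCommGroup V] [Module k V]

noncomputable def reflection (Q : QuadraticForm k V) {w : V} (hw : Q w ≠ 0) :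
    Q.IsometryEquiv Q where
  toLinearEquiv := Module.reflection (x := w) (f := (Q w)⁻¹ • polarBilin Q w) <| by
    simp [polar_self, mul_left_comm, inv_mul_cancel₀ hw]
  map_app' x := by
    simp only [LinearEquiv.toFun_eq_coe, Module.reflection_apply, LinearMap.smul_apply,
      polarBilin_apply_apply, smul_eq_mul]
    rw [sub_eq_add_neg, ← neg_smul, QuadraticMap.map_add Q, QuadraticMap.map_smul, polar_smul_right,
      polar_comm, smul_eq_mul, smul_eq_mul]
    field_simp
    ring

theorem reflection_apply (Q : QuadraticForm k V) {w : V} (hw : Q w ≠ 0) (x : V) :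
    Q.reflection hw x = x - (polar Q w x / Q w) • w := by
  rw [div_eq_inv_mul]
  rfl

theorem reflection_apply_self (Q : QuadraticForm k V) {w : V} (hw : Q w ≠ 0) :
    Q.reflection hw w = -w := by
  rw [reflection_apply, polar_self, two_nsmul, ← two_mul, mul_div_cancel_right₀ _ hw, two_smul]
  abel

theorem reflection_apply_self_sub {Q : QuadraticForm k V} {u v : V} (huv : Q u = Q v)
    (h : Q (u - v) ≠ 0) : Q.reflection h u = v := by
  have hpolar : polar Q (u - v) u = Q (u - v) := by
    rw [polar_sub_left, polar_self, sub_eq_add_neg u v, QuadraticMap.map_add Q,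
      QuadraticMap.map_neg, polar_neg_right, polar_comm, huv, two_nsmul]
    ring
  rw [reflection_apply, hpolar, div_self h, one_smul, sub_sub_cancel]

theorem exists_isometryEquiv_apply_eq [NeZero (2 : k)] (Q : QuadraticForm k V) {u v : V}
    (huv : Q u = Q v) (hu : Q u ≠ 0) : ∃ g : Q.IsometryEquiv Q, g u = v := by
  by_cases h : Q (u - v) = 0
  · -- then `Q (u + v) = 4 Q u ≠ 0`, and reflecting in `u + v` and then in `v` moves `u` to `v`
    have hsum : Q (u + v) ≠ 0 := by
      have : Q (u + v) + Q (u - v) = 4 * Q u := by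
        rw [sub_eq_add_neg, QuadraticMap.map_add Q, QuadraticMap.map_add Q, QuadraticMap.map_neg,
          polar_neg_right, ← huv]
        ring
      rw [h, add_zero] at this
      rw [this]
      exact mul_ne_zero (by simpa [show (4 : k) = 2 * 2 by norm_num] using NeZero.ne (2 : k)) hu
    have hv : Q (-v) ≠ 0 := by rwa [QuadraticMap.map_neg, ← huv]
    refine ⟨(Q.reflection (w := u - -v) (by rwa [sub_neg_eq_add])).trans (Q.reflection hv), ?_⟩
    change Q.reflection hv (Q.reflection _ u) = v
    rw [reflection_apply_self_sub (huv.trans (QuadraticMap.map_neg Q v).symm),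
      reflection_apply_self, neg_neg]
  · exact ⟨Q.reflection h, reflection_apply_self_sub huv h⟩

end QuadraticForm

section Diagonal

variable {k : Type} [Field k] {ι κ : Type} [Fintype ι] [Fintype κ]

theorem diagQF_apply (d : ι → k) (x : ι → k) : diagQF k d x = ∑ i, d i * (x i * x i) := by
  simp [diagQF, weightedSumSquares_apply]

noncomputable def diagQFSumIsometryEquivProd (d : ι → k) (e : κ → k) :
    (diagQF k (Sum.elim d e)).IsometryEquiv ((diagQF k d).prod (diagQF k e)) where
  toLinearEquiv := LinearEquiv.sumArrowLequivProdArrow ι κ k k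
  map_app' x := by simp [diagQF_apply, Fintype.sum_sum_type, LinearEquiv.sumArrowLequivProdArrow]

end Diagonal

theorem QuadraticMap.IsometryEquiv.polar_map {k M₁ M₂ : Type*} [CommRing k] [AddCommGroup M₁]
    [Module k M₁] [AddCommGroup M₂] [Module k M₂] {Q₁ : QuadraticForm k M₁}
    {Q₂ : QuadraticForm k M₂} (f : Q₁.IsometryEquiv Q₂) (x y : M₁) :
    polar Q₂ (f x) (f y) = polar Q₁ x y := by
  simp only [polar, ← map_add, f.map_app]

section LineCancellation

variable {k : Type} [Field k] {M₁ M₂ : Type*} [AddCommGroup M₁] [Module k M₁]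
  [AddCommGroup M₂] [Module k M₂]

theorem diagQF_prod_apply_one_zero (a : k) (Q : QuadraticForm k M₁) :
    (diagQF k ![a]).prod Q (1, 0) = a := by
  simp [diagQF_apply]

theorem polar_diagQF_prod_one_zero (a : k) (Q : QuadraticForm k M₁) (x : (Fin 1 → k) × M₁) :
    polar ((diagQF k ![a]).prod Q) (1, 0) x = 2 * a * x.1 0 := by
  simp [polar, diagQF_apply]
  ring

theorem fst_apply_zero_eq_zero [NeZero (2 : k)] {a : k} (ha : a ≠ 0)
    {Q₁ : QuadraticForm k M₁} {Q₂ : QuadraticForm k M₂}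
    (E : ((diagQF k ![a]).prod Q₁).IsometryEquiv ((diagQF k ![a]).prod Q₂))
    (hE : E (1, 0) = (1, 0)) (m : M₁) : (E (0, m)).1 = 0 := by
  -- `(0, m)` is orthogonal to `(1, 0)`, hence so is its image
  have h := E.polar_map (1, 0) (0, m)
  rw [hE, polar_diagQF_prod_one_zero, polar_diagQF_prod_one_zero] at h
  funext i
  rw [Subsingleton.elim i 0]
  simpa [ha, NeZero.ne] using h

theorem QuadraticMap.Equivalent.cancel_left_diagQF_singleton [NeZero (2 : k)] {a : k} (ha : a ≠ 0)
    {Q₁ : QuadraticForm k M₁} {Q₂ : QuadraticForm k M₂}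
    (h : ((diagQF k ![a]).prod Q₁).Equivalent ((diagQF k ![a]).prod Q₂)) :
    Q₁.Equivalent Q₂ := by
  obtain ⟨f⟩ := h
  obtain ⟨g, hg⟩ := QuadraticForm.exists_isometryEquiv_apply_eq _ (u := (1, 0))
    (v := f.symm (1, 0))
    (by rw [f.symm.map_app, diagQF_prod_apply_one_zero, diagQF_prod_apply_one_zero])
    (by rwa [diagQF_prod_apply_one_zero])
  -- `E` fixes `(1, 0)`, so it maps its orthogonal complement `0 × M₁` onto `0 × M₂`
  set E := g.trans f
  have hE : E (1, 0) = (1, 0) := by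
    change f (g (1, 0)) = _
    rw [hg, f.apply_symm_apply]
  have hE' : E.symm (1, 0) = (1, 0) := by rw [E.symm_apply_eq, hE]
  have hE0 (m : M₁) : E (0, m) = (0, (E (0, m)).2) :=
    Prod.ext (fst_apply_zero_eq_zero ha E hE m) rfl
  have hE0' (m : M₂) : E.symm (0, m) = (0, (E.symm (0, m)).2) :=
    Prod.ext (fst_apply_zero_eq_zero ha E.symm hE' m) rfl
  refine ⟨⟨LinearEquiv.ofLinearMap
    (LinearMap.snd k _ M₂ ∘ₗ E.toLinearEquiv.toLinearMap ∘ₗ LinearMap.inr k _ M₁)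
    (LinearMap.snd k _ M₁ ∘ₗ E.symm.toLinearEquiv.toLinearMap ∘ₗ LinearMap.inr k _ M₂) ?_ ?_, ?_⟩⟩
  · ext m
    change (E (0, (E.symm (0, m)).2)).2 = m
    rw [← hE0', E.apply_symm_apply]
  · ext m
    change (E.symm (0, (E (0, m)).2)).2 = m
    rw [← hE0, E.symm_apply_apply]
  · intro m
    change Q₂ (E (0, m)).2 = Q₁ m
    simpa using (congrArg ((diagQF k ![a]).prod Q₂) (hE0 m)).symm.trans (E.map_app (0, m))

end LineCancellation

namespace FormIsom

variable {k : Type} [Field k] {ι κ μ ι' κ' : Type} [Fintype ι] [Fintype κ] [Fintype μ]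
  [Fintype ι'] [Fintype κ']

theorem refl (d : ι → k) : FormIsom k d d := Equivalent.refl _

theorem symm {d : ι → k} {e : κ → k} (h : FormIsom k d e) : FormIsom k e d := Equivalent.symm h

theorem trans {d : ι → k} {e : κ → k} {f : μ → k} (h : FormIsom k d e) (h' : FormIsom k e f) :
    FormIsom k d f :=
  Equivalent.trans h h'

theorem of_equiv (σ : ι ≃ κ) {d : ι → k} {e : κ → k} (h : ∀ i, d i = e (σ i)) :
    FormIsom k d e := by
  refine ⟨⟨LinearEquiv.funCongrLeft k k σ.symm, fun x => ?_⟩⟩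
  simp only [LinearEquiv.toFun_eq_coe, LinearEquiv.funCongrLeft_apply, LinearMap.funLeft_apply,
    diagQF_apply, h]
  rw [← σ.sum_comp]
  simp

theorem sum_comm (d : ι → k) (e : κ → k) : FormIsom k (Sum.elim d e) (Sum.elim e d) :=
  of_equiv (Equiv.sumComm ι κ) (by rintro (i | i) <;> rfl)

theorem sum_assoc (d : ι → k) (e : κ → k) (f : μ → k) :
    FormIsom k (Sum.elim (Sum.elim d e) f) (Sum.elim d (Sum.elim e f)) :=
  of_equiv (Equiv.sumAssoc ι κ μ) (by rintro ((i | i) | i) <;> rfl)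

theorem sum_congr {d : ι → k} {e : κ → k} {d' : ι' → k} {e' : κ' → k}
    (hd : FormIsom k d d') (he : FormIsom k e e') :
    FormIsom k (Sum.elim d e) (Sum.elim d' e') :=
  ⟨(diagQFSumIsometryEquivProd d e).trans <|
    (Equivalent.prod hd he).some.trans (diagQFSumIsometryEquivProd d' e').symm⟩

theorem cancel_left_singleton [NeZero (2 : k)] {a : k} (ha : a ≠ 0) {d : ι → k} {e : κ → k}
    (h : FormIsom k (Sum.elim ![a] d) (Sum.elim ![a] e)) : FormIsom k d e :=
  Equivalent.cancel_left_diagQF_singleton ha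
    ⟨(diagQFSumIsometryEquivProd _ d).symm.trans <| h.some.trans (diagQFSumIsometryEquivProd _ e)⟩

theorem card_eq {d : ι → k} {e : κ → k} (h : FormIsom k d e) :
    Fintype.card ι = Fintype.card κ := by
  simpa using h.some.toLinearEquiv.finrank_eq

theorem ne_zero [NeZero (2 : k)] {d : ι → k} {e : κ → k} (h : FormIsom k d e)
    (hd : ∀ i, d i ≠ 0) (j : κ) : e j ≠ 0 := by
  have hrad := (QuadraticForm.finrank_radical_of_equiv_weightedSumSquares h).symm.trans
    (QuadraticForm.finrank_radical_of_equiv_weightedSumSquares (Equivalent.refl (diagQF k d)))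
  have hd0 : {i | d i = 0} = ∅ := Set.eq_empty_of_forall_notMem hd
  rw [hd0, Set.ncard_empty, Set.ncard_eq_zero] at hrad
  exact Set.eq_empty_iff_forall_notMem.mp hrad j

end FormIsom

section Hyperbolic

variable {k : Type} [Field k] {ι κ : Type} [Fintype ι] [Fintype κ]

theorem formIsom_hypForm_add (m n : ℕ) :
    FormIsom k (hypForm k (m + n)) (Sum.elim (hypForm k m) (hypForm k n)) :=
  FormIsom.symm <| FormIsom.of_equiv (finSumFinEquiv.trans (finCongr (mul_add 2 m n).symm)) <| by
    rintro (i | i) <;> simp [hypForm, Nat.add_mod]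

theorem formIsom_hypForm_one : FormIsom k (hypForm k 1) (Sum.elim ![1] ![-1]) :=
  FormIsom.symm <| FormIsom.of_equiv finSumFinEquiv <| by
    rintro (i | i) <;> fin_cases i <;> rfl

theorem formIsom_sum_hypForm_zero (d : ι → k) : FormIsom k (Sum.elim (hypForm k 0) d) d :=
  FormIsom.of_equiv (@Equiv.emptySum _ ι Fin.isEmpty') (by rintro (⟨_, ⟨⟩⟩ | i); rfl)

theorem formIsom_sum_hypForm_succ (m : ℕ) (d : ι → k) :
    FormIsom k (Sum.elim (hypForm k (m + 1)) d)
      (Sum.elim ![1] (Sum.elim ![-1] (Sum.elim (hypForm k m) d))) := by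
  rw [Nat.add_comm]
  refine (FormIsom.sum_congr (formIsom_hypForm_add 1 m) (.refl d)).trans ?_
  refine (FormIsom.sum_assoc _ _ d).trans ?_
  refine (FormIsom.sum_congr formIsom_hypForm_one (.refl _)).trans ?_
  exact FormIsom.sum_assoc _ _ _

theorem FormIsom.cancel_left_hypForm [NeZero (2 : k)] {m : ℕ} {d : ι → k} {e : κ → k}
    (h : FormIsom k (Sum.elim (hypForm k m) d) (Sum.elim (hypForm k m) e)) : FormIsom k d e := by
  induction m with
  | zero => exact (formIsom_sum_hypForm_zero d).symm.trans (h.trans (formIsom_sum_hypForm_zero e))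
  | succ m ih =>
    refine ih <| cancel_left_singleton (neg_ne_zero.2 one_ne_zero) <|
      cancel_left_singleton one_ne_zero ?_
    exact (formIsom_sum_hypForm_succ m d).symm.trans (h.trans (formIsom_sum_hypForm_succ m e))

end Hyperbolic

section WittIndex

variable {k : Type} [Field k] {ι κ : Type} [Fintype ι] [Fintype κ]

theorem FormIsom.wittIndex_eq {d : ι → k} {e : κ → k} (h : FormIsom k d e) :
    wittIndex k d = wittIndex k e := by
  unfold wittIndex
  congr 1
  ext m
  exact ⟨fun ⟨s, f, hf⟩ => ⟨s, f, h.symm.trans hf⟩, fun ⟨s, f, hf⟩ => ⟨s, f, h.trans hf⟩⟩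

theorem two_mul_le_card_of_formIsom {d : ι → k} {m : ℕ} {e : κ → k}
    (h : FormIsom k d (Sum.elim (hypForm k m) e)) : 2 * m ≤ Fintype.card ι := by
  simp [h.card_eq]

theorem bddAbove_wittIndex_set (d : ι → k) :
    BddAbove {m : ℕ | ∃ (s : ℕ) (e : Fin s → k), FormIsom k d (Sum.elim (hypForm k m) e)} :=
  ⟨Fintype.card ι, by
    rintro m ⟨_, _, h⟩
    exact (Nat.le_mul_of_pos_left m two_pos).trans (two_mul_le_card_of_formIsom h)⟩

theorem le_wittIndex {d : ι → k} {m : ℕ} {e : κ → k}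
    (h : FormIsom k d (Sum.elim (hypForm k m) e)) : m ≤ wittIndex k d := by
  refine le_csSup (bddAbove_wittIndex_set d) ⟨_, e ∘ (Fintype.equivFin κ).symm, h.trans ?_⟩
  exact .sum_congr (.refl _) (.of_equiv (Fintype.equivFin κ) fun i => by simp)

theorem exists_formIsom_wittIndex (d : ι → k) :
    ∃ (s : ℕ) (e : Fin s → k), FormIsom k d (Sum.elim (hypForm k (wittIndex k d)) e) :=
  show wittIndex k d ∈ _ from
  Nat.sSup_mem ⟨0, _, d ∘ (Fintype.equivFin ι).symm, (FormIsom.of_equiv (Fintype.equivFin ι)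
    fun i => by simp).trans (formIsom_sum_hypForm_zero _).symm⟩ (bddAbove_wittIndex_set d)

theorem two_mul_wittIndex_le_card (d : ι → k) : 2 * wittIndex k d ≤ Fintype.card ι :=
  have ⟨_, _, h⟩ := exists_formIsom_wittIndex d
  two_mul_le_card_of_formIsom h

theorem wittIndex_sum_hypForm [NeZero (2 : k)] (m : ℕ) (d : ι → k) :
    wittIndex k (Sum.elim (hypForm k m) d) = m + wittIndex k d := by
  have hge : m + wittIndex k d ≤ wittIndex k (Sum.elim (hypForm k m) d) := by
    obtain ⟨s, e, he⟩ := exists_formIsom_wittIndex d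
    refine le_wittIndex (e := e) ?_
    refine (FormIsom.sum_congr (.refl _) he).trans ((FormIsom.sum_assoc _ _ e).symm.trans ?_)
    exact .sum_congr (formIsom_hypForm_add m _).symm (.refl e)
  obtain ⟨s, e, he⟩ := exists_formIsom_wittIndex (Sum.elim (hypForm k m) d)
  obtain ⟨c, hc⟩ := Nat.exists_eq_add_of_le (le_of_add_le_left hge)
  rw [hc] at he ⊢
  have hd : FormIsom k d (Sum.elim (hypForm k c) e) :=
    .cancel_left_hypForm <| he.trans <|
      (FormIsom.sum_congr (formIsom_hypForm_add m c) (.refl e)).trans (FormIsom.sum_assoc _ _ e)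
  have := le_wittIndex hd
  omega

theorem wittIndex_sum_one_le [NeZero (2 : k)] (d : ι → k) :
    wittIndex k (Sum.elim d ![1]) ≤ wittIndex k d + 1 := by
  obtain ⟨s, e, he⟩ := exists_formIsom_wittIndex (Sum.elim d ![1])
  rcases h : wittIndex k (Sum.elim d ![1]) with _ | W
  · omega
  rw [h] at he
  have hd : FormIsom k d (Sum.elim ![-1] (Sum.elim (hypForm k W) e)) :=
    .cancel_left_singleton one_ne_zero <|
      (FormIsom.sum_comm _ d).trans (he.trans (formIsom_sum_hypForm_succ W e))
  have := le_wittIndex (hd.trans ((FormIsom.sum_comm _ _).trans (FormIsom.sum_assoc _ _ _)))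
  omega

end WittIndex

theorem add_two_mul_sub_two_le_of_mInv_witness {k : Type} [Field k] [NeZero (2 : k)] {j n : ℕ}
    {d : Fin n → k} (hd : ∀ t, d t ≠ 0) (hdj : wittIndex k d < j)
    (hdσ : ∀ σ : Fin 1 → k, (∀ t, σ t ≠ 0) → j ≤ wittIndex k (Sum.elim d σ)) :
    mInv k 1 1 + 2 * (j : ℕ∞) - 2 ≤ n := by
  obtain ⟨s, r, hr⟩ := exists_formIsom_wittIndex d
  have hr0 : wittIndex k r = 0 := by
    have h := hr.wittIndex_eq
    rw [wittIndex_sum_hypForm] at h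
    omega
  have hjd : j ≤ wittIndex k d + 1 := (hdσ ![1] (by simp)).trans (wittIndex_sum_one_le d)
  generalize wittIndex k d = w at hr hdj hjd
  have hn : n = 2 * w + s := by simpa using hr.card_eq
  have hrσ (σ : Fin 1 → k) (hσ : ∀ t, σ t ≠ 0) : 1 ≤ wittIndex k (Sum.elim r σ) := by
    have h := ((hr.sum_congr (.refl σ)).trans (FormIsom.sum_assoc _ _ σ)).wittIndex_eq
    rw [wittIndex_sum_hypForm] at h
    have := hdσ σ hσ
    omega
  have hs : 1 ≤ s := by
    have h1 := hrσ ![1] (by simp)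
    have h2 := two_mul_wittIndex_le_card (Sum.elim r ![1])
    simp only [Fintype.card_sum, Fintype.card_fin] at h2
    omega
  obtain rfl : j = w + 1 := by omega
  have hm : mInv k 1 1 ≤ s :=
    sInf_le ⟨s, rfl, hs, r, fun t => hr.ne_zero hd (Sum.inr t), by omega, hrσ⟩
  calc mInv k 1 1 + 2 * ((w + 1 : ℕ) : ℕ∞) - 2 ≤ s + 2 * ((w + 1 : ℕ) : ℕ∞) - 2 := by gcongr
    _ = n := by
      rw [hn]
      norm_cast
      omega

theorem statement14_general (k : Type) [Field k] (hchar : ringChar k ≠ 2)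
    (j : ℕ) :
    mInv k 1 1 + 2 * (j : ℕ∞) - 2 ≤ mInv k 1 j := by
  have : NeZero (2 : k) := ⟨Ring.two_ne_zero hchar⟩
  refine le_sInf ?_
  rintro _ ⟨n, rfl, -, d, hd, hdj, hdσ⟩
  exact add_two_mul_sub_two_le_of_mInv_witness hd hdj hdσ

/-- **Lemma (decreasing `j` in `m_{1,j}`).**  Let `k` be a field of characteristic ≠ 2
and `j ≥ 1`.  If `m_{1,j}(k) < ∞`, then `m_{1,j}(k) ≥ m_{1,1}(k) + 2j - 2`. -/
theorem statement14 (k : Type) [Field k] (hchar : ringChar k ≠ 2)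
    (j : ℕ) (hj : 1 ≤ j) (hfin : mInv k 1 j ≠ ⊤) :
    mInv k 1 1 + 2 * (j : ℕ∞) - 2 ≤ mInv k 1 j :=
  statement14_general k hchar j
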